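/- Let 𝔽_q be a finite field of characteristic p, let e ≥ 1 with p not dividing e, let k be a natural number, and let f ∈ 𝔽_q[Y] be a monic polynomial dividing Y^e - 1. Set W = 𝔽_q[Z]/⟨Z^{p^k} - 1⟩ and B = W[Y]/⟨f_W⟩, where f_W is the image of f in W[Y]. Then for every ideal C of B there exist polynomials h_0, h_1, …, h_{p^k - 1} ∈ 𝔽_q[Y] with h_{i+1} ∣ h_i for all 0 ≤ i < p^k - 1 and h_0 ∣ f, such that C is the ideal of B generated by the p^k elements (z - 1)^i · h_i(y) for 0 ≤ i ≤ p^k - 1, where z denotes the image of Z and y the image of Y in B. -/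

import Mathlib

/-!
Put `t = z - 1`, so that `t ^ (p ^ k) = z ^ (p ^ k) - 1 = 0` in characteristic `p`, and every
element of `B` is `a(y) + t * b` with `a ∈ 𝔽_q[Y]`. For an ideal `C`, the `i`-th torsion ideal
`{a : t ^ i * a(y) ∈ C + (t ^ (i + 1))}` of `𝔽_q[Y]` contains `f` and grows with `i`; let `h_i` be
a generator. Since `f` is squarefree, `h_i` and `f / h_i` are coprime, so `u * h_i ^ 2 ≡ h_i`
modulo `f` for some `u`; this lets the defining congruence of `h_i` be upgraded, by descending
induction on `i`, to `t ^ i * h_i(y) ∈ C`. Conversely an element `t ^ i * (a(y) + t * b)` of `C`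
has `h_i ∣ a`, so subtracting a multiple of `t ^ i * h_i(y)` pushes it into `C ∩ (t ^ (i + 1))`.
-/

open Polynomial

instance {R : Type*} [CommRing R] (I : Ideal R) (J : Ideal (R ⧸ I)[X]) : J.IsTwoSided :=
  Ideal.instIsTwoSided_1 J

theorem Squarefree.exists_mul_mul_add_mul_eq_of_dvd {A : Type*} [CommRing A] [IsDomain A]
    [IsPrincipalIdealRing A] {f g : A} (hf : Squarefree f) (hg : g ∣ f) :
    ∃ u v, u * g * g + v * f = g := by
  obtain ⟨m, rfl⟩ := hg
  obtain ⟨u, v, huv⟩ := (squarefree_mul_iff.mp hf).1.isCoprime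
  exact ⟨u, v, by linear_combination g * huv⟩

namespace Ideal

variable {A B : Type*} [CommRing A] [CommRing B]

def torsionIdeal (C : Ideal B) (φ : A →+* B) (t : B) (i : ℕ) : Ideal A :=
  ((C ⊔ span {t ^ (i + 1)}).colon (span {t ^ i})).comap φ

variable {C : Ideal B} {φ : A →+* B} {t : B}

theorem mem_torsionIdeal {i : ℕ} {a : A} :
    a ∈ C.torsionIdeal φ t i ↔ ∃ r, t ^ i * φ a + t ^ (i + 1) * r ∈ C := by
  rw [torsionIdeal, mem_comap, mem_colon_span_singleton, Submodule.mem_sup]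
  constructor
  · rintro ⟨c, hc, y, hy, hcy⟩
    obtain ⟨r, rfl⟩ := mem_span_singleton'.mp hy
    exact ⟨-r, by convert hc using 1; linear_combination -hcy⟩
  · rintro ⟨r, hr⟩
    exact ⟨_, hr, -r * t ^ (i + 1), mem_span_singleton'.mpr ⟨-r, rfl⟩, by ring⟩

theorem ker_le_torsionIdeal (i : ℕ) : RingHom.ker φ ≤ C.torsionIdeal φ t i := fun a ha =>
  mem_torsionIdeal.mpr ⟨0, by simp [RingHom.mem_ker.mp ha]⟩

theorem torsionIdeal_le_succ (i : ℕ) : C.torsionIdeal φ t i ≤ C.torsionIdeal φ t (i + 1) := by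
  intro a ha
  obtain ⟨r, hr⟩ := mem_torsionIdeal.mp ha
  exact mem_torsionIdeal.mpr ⟨r, by convert C.mul_mem_left t hr using 1; ring⟩

theorem pow_mul_mem_of_mem_torsionIdeal {i : ℕ} {a u : A} (ha : a ∈ C.torsionIdeal φ t i)
    (hu : φ u * φ a * φ a = φ a) (hsucc : t ^ (i + 1) * φ a ∈ C) : t ^ i * φ a ∈ C := by
  obtain ⟨r, hr⟩ := mem_torsionIdeal.mp ha
  have key : t ^ i * φ a =
      φ u * φ a * (t ^ i * φ a + t ^ (i + 1) * r) - φ u * r * (t ^ (i + 1) * φ a) := by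
    linear_combination (-(t ^ i)) * hu
  rw [key]
  exact C.sub_mem (C.mul_mem_left _ hr) (C.mul_mem_left _ hsucc)

open Submodule.IsPrincipal

variable [IsPrincipalIdealRing A]

theorem generator_torsionIdeal_succ_dvd (i : ℕ) :
    generator (C.torsionIdeal φ t (i + 1)) ∣ generator (C.torsionIdeal φ t i) :=
  (mem_iff_generator_dvd _).mp (torsionIdeal_le_succ i (generator_mem _))

theorem generator_torsionIdeal_dvd {f : A} (hφf : φ f = 0) (i : ℕ) :
    generator (C.torsionIdeal φ t i) ∣ f :=
  (mem_iff_generator_dvd _).mp (ker_le_torsionIdeal i (RingHom.mem_ker.mpr hφf))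

theorem le_span_pow_mul_generator_torsionIdeal {n : ℕ} (htn : t ^ n = 0)
    (hdec : ∀ b, ∃ a b', b = φ a + t * b')
    (hgen : ∀ i, t ^ i * φ (generator (C.torsionIdeal φ t i)) ∈ C) :
    C ≤ span (Set.range fun i : Fin n => t ^ (i : ℕ) * φ (generator (C.torsionIdeal φ t i))) := by
  let D := span (Set.range fun i : Fin n => t ^ (i : ℕ) * φ (generator (C.torsionIdeal φ t i)))
  suffices ∀ r, t ^ 0 * r ∈ C → t ^ 0 * r ∈ D from
    fun r hr => by simpa using this r (by simpa using hr)
  refine Nat.decreasingInduction (motive := fun m _ => ∀ r, t ^ m * r ∈ C → t ^ m * r ∈ D)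
    (fun k hk ih r hr => ?_) (by simp [htn]) n.zero_le
  obtain ⟨a, b, rfl⟩ := hdec r
  have ha : a ∈ C.torsionIdeal φ t k := mem_torsionIdeal.mpr ⟨b, by convert hr using 1; ring⟩
  obtain ⟨s, rfl⟩ := (mem_iff_generator_dvd _).mp ha
  have hgen_mul {I : Ideal B} (hI : t ^ k * φ (generator (C.torsionIdeal φ t k)) ∈ I) :
      t ^ k * φ (generator (C.torsionIdeal φ t k) * s) ∈ I := by
    rw [map_mul, ← mul_assoc]
    exact I.mul_mem_right _ hI
  have hb : t ^ (k + 1) * b ∈ C := by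
    convert C.sub_mem hr (hgen_mul (hgen k)) using 1
    ring
  rw [mul_add, ← mul_assoc, ← pow_succ]
  exact D.add_mem (hgen_mul (subset_span ⟨⟨k, hk⟩, rfl⟩)) (ih b hb)

variable [IsDomain A]

theorem pow_mul_generator_torsionIdeal_mem {n : ℕ} (htn : t ^ n = 0) {f : A} (hf : Squarefree f)
    (hφf : φ f = 0) (i : ℕ) : t ^ i * φ (generator (C.torsionIdeal φ t i)) ∈ C := by
  let g := fun i => generator (C.torsionIdeal φ t i)
  rcases le_or_gt n i with hni | hin
  · simp [pow_eq_zero_of_le hni htn]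
  refine Nat.decreasingInduction (motive := fun m _ => t ^ m * φ (g m) ∈ C)
    (fun k _ ih => ?_) (by simp [htn]) hin.le
  obtain ⟨u, v, huv⟩ := hf.exists_mul_mul_add_mul_eq_of_dvd (generator_torsionIdeal_dvd hφf k)
  have hu : φ u * φ (g k) * φ (g k) = φ (g k) := by
    simpa [hφf] using congrArg φ huv
  obtain ⟨s, hs⟩ : g (k + 1) ∣ g k := generator_torsionIdeal_succ_dvd k
  refine pow_mul_mem_of_mem_torsionIdeal (generator_mem _) hu ?_
  rw [hs, map_mul, ← mul_assoc]
  exact C.mul_mem_right _ ih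

theorem eq_span_pow_mul_generator_torsionIdeal {n : ℕ} (htn : t ^ n = 0)
    (hdec : ∀ b, ∃ a b', b = φ a + t * b') {f : A} (hf : Squarefree f) (hφf : φ f = 0) :
    C = span (Set.range fun i : Fin n => t ^ (i : ℕ) * φ (generator (C.torsionIdeal φ t i))) :=
  have hgen := pow_mul_generator_torsionIdeal_mem htn hf hφf
  le_antisymm (le_span_pow_mul_generator_torsionIdeal htn hdec hgen)
    (span_le.mpr <| Set.range_subset_iff.mpr fun i => hgen i)

end Ideal

theorem AlgHom.exists_eq_algebraMap_add_sub_one_mul {R S : Type*} [CommRing R] [CommRing S]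
    [Algebra R S] {π : R[X] →ₐ[R] S} (hπ : Function.Surjective π) (x : S) :
    ∃ c q, x = algebraMap R S c + (π X - 1) * q := by
  obtain ⟨P, rfl⟩ := hπ x
  obtain ⟨q, hq⟩ : X - C 1 ∣ P - C (P.eval 1) := X_sub_C_dvd_sub_C_eval
  refine ⟨P.eval 1, π q, ?_⟩
  rw [← π.commutes, Polynomial.algebraMap_eq, ← map_one π, ← C_1, ← map_sub, ← map_mul, ← hq,
    ← map_add, add_sub_cancel]

theorem Polynomial.exists_eq_map_add_C_mul {R S : Type*} [Semiring R] [Semiring S] (ψ : R →+* S)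
    {s : S} (h : ∀ x, ∃ c q, x = ψ c + s * q) (Q : S[X]) :
    ∃ (a : R[X]) (Q' : S[X]), Q = a.map ψ + C s * Q' := by
  induction Q using Polynomial.induction_on' with
  | add P Q hP hQ =>
    obtain ⟨a, P', rfl⟩ := hP
    obtain ⟨b, Q', rfl⟩ := hQ
    exact ⟨a + b, P' + Q', by rw [Polynomial.map_add, mul_add, add_add_add_comm]⟩
  | monomial n x =>
    obtain ⟨c, q, rfl⟩ := h x
    exact ⟨monomial n c, monomial n q, by simp [C_mul_monomial]⟩

theorem RingHom.map_sub_one_pow_char_pow_eq_zero {R S : Type*} [CommRing R] [CommRing S] {p : ℕ}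
    [Fact p.Prime] [CharP R p] (Φ : R →+* S) {x : R} {k : ℕ} (h : Φ (x ^ p ^ k - 1) = 0) :
    (Φ x - 1) ^ p ^ k = 0 := by
  rw [← map_one Φ, ← map_sub, ← map_pow, sub_pow_char_pow, one_pow, h]

theorem Polynomial.squarefree_of_dvd_X_pow_sub_one {K : Type*} [Field K] (p : ℕ) [CharP K p]
    {e : ℕ} (hpe : ¬ p ∣ e) {f : K[X]} (hdvd : f ∣ X ^ e - 1) : Squarefree f := by
  have hsep : (X ^ e - C 1 : K[X]).Separable := separable_X_pow_sub_C' p e 1 hpe one_ne_zero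
  rw [C_1] at hsep
  exact (hsep.of_dvd hdvd).squarefree

theorem ideal_structure_over_chain_ring_general {K : Type*} [Field K]
    (p : ℕ) (hp : p.Prime) [CharP K p] (e : ℕ) (hpe : ¬ p ∣ e)
    (k : ℕ) (f : K[X]) (hdvd : f ∣ X ^ e - 1)
    (C : Ideal ((K[X] ⧸ Ideal.span {(X : K[X]) ^ p ^ k - 1})[X] ⧸
      Ideal.span
        {f.map (algebraMap K (K[X] ⧸ Ideal.span {(X : K[X]) ^ p ^ k - 1}))})) :
    ∃ h : Fin (p ^ k) → K[X],
      (∀ i j : Fin (p ^ k), (j : ℕ) = (i : ℕ) + 1 → h j ∣ h i) ∧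
      (∀ i : Fin (p ^ k), (i : ℕ) = 0 → h i ∣ f) ∧
      C = Ideal.span (Set.range fun i : Fin (p ^ k) =>
        (Ideal.Quotient.mk
            (Ideal.span
              {f.map (algebraMap K (K[X] ⧸ Ideal.span {(X : K[X]) ^ p ^ k - 1}))})
            (Polynomial.C
              (Ideal.Quotient.mk (Ideal.span {(X : K[X]) ^ p ^ k - 1}) X)) - 1) ^ (i : ℕ) *
          Ideal.Quotient.mk
            (Ideal.span
              {f.map (algebraMap K (K[X] ⧸ Ideal.span {(X : K[X]) ^ p ^ k - 1}))})
            ((h i).map (algebraMap K (K[X] ⧸ Ideal.span {(X : K[X]) ^ p ^ k - 1})))) := by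
  have : Fact p.Prime := ⟨hp⟩
  let IW : Ideal K[X] := Ideal.span {X ^ p ^ k - 1}
  let W := K[X] ⧸ IW
  let IB : Ideal W[X] := Ideal.span {f.map (algebraMap K W)}
  let B := W[X] ⧸ IB
  -- Instance search does not find the commutative ring structure of this nested quotient.
  let : CommRing B := { (inferInstance : Ring B) with
    mul_comm := by rintro ⟨a⟩ ⟨b⟩; exact congrArg _ (mul_comm a b) }
  let φ : K[X] →+* B := (Ideal.Quotient.mk IB).comp (mapRingHom (algebraMap K W))
  let t : B := Ideal.Quotient.mk IB (Polynomial.C (Ideal.Quotient.mk IW X)) - 1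
  have hX : Ideal.Quotient.mk IW (X ^ p ^ k - 1) = 0 :=
    Ideal.Quotient.eq_zero_iff_mem.mpr (Ideal.mem_span_singleton_self _)
  have htn : t ^ p ^ k = 0 :=
    RingHom.map_sub_one_pow_char_pow_eq_zero
      ((Ideal.Quotient.mk IB).comp (Polynomial.C.comp (Ideal.Quotient.mk IW)))
      (by simp only [RingHom.comp_apply, hX, map_zero])
  have hdec (b : B) : ∃ a b', b = φ a + t * b' := by
    obtain ⟨Q, rfl⟩ := Ideal.Quotient.mk_surjective b
    obtain ⟨a, Q', hQ⟩ := Q.exists_eq_map_add_C_mul (algebraMap K W)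
      (AlgHom.exists_eq_algebraMap_add_sub_one_mul (Ideal.Quotient.mkₐ_surjective K IW))
    refine ⟨a, Ideal.Quotient.mk IB Q', ?_⟩
    rw [hQ, map_add, map_mul, C_sub, C_1, map_sub, map_one]
    rfl
  have hφf : φ f = 0 := Ideal.Quotient.eq_zero_iff_mem.mpr (Ideal.mem_span_singleton_self _)
  refine ⟨fun i => Submodule.IsPrincipal.generator (C.torsionIdeal φ t i), fun i j hij => ?_,
    fun i _ => Ideal.generator_torsionIdeal_dvd hφf i, ?_⟩
  · dsimp only
    rw [hij]
    exact Ideal.generator_torsionIdeal_succ_dvd i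
  · exact (Ideal.eq_span_pow_mul_generator_torsionIdeal (C := C) htn hdec
      (squarefree_of_dvd_X_pow_sub_one p hpe hdvd) hφf :)

/-- Every ideal of `B = W[Y]/⟨f_W⟩`, where `W = 𝔽_q[Z]/⟨Z^(p^k) - 1⟩` and `f` is monic
dividing `Y^e - 1` with `p ∤ e`, is generated by elements
`(z-1)^i · h_i(y)`, `0 ≤ i ≤ p^k - 1`, where `h_{i+1} ∣ h_i` and `h_0 ∣ f`. -/
theorem ideal_structure_over_chain_ring {K : Type*} [Field K] [Fintype K]
    (p : ℕ) (hp : p.Prime) [CharP K p] (e : ℕ) (he : 1 ≤ e) (hpe : ¬ p ∣ e)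
    (k : ℕ) (f : K[X]) (hf : f.Monic) (hdvd : f ∣ X ^ e - 1)
    (C : Ideal ((K[X] ⧸ Ideal.span {(X : K[X]) ^ p ^ k - 1})[X] ⧸
      Ideal.span
        {f.map (algebraMap K (K[X] ⧸ Ideal.span {(X : K[X]) ^ p ^ k - 1}))})) :
    ∃ h : Fin (p ^ k) → K[X],
      (∀ i j : Fin (p ^ k), (j : ℕ) = (i : ℕ) + 1 → h j ∣ h i) ∧
      (∀ i : Fin (p ^ k), (i : ℕ) = 0 → h i ∣ f) ∧
      C = Ideal.span (Set.range fun i : Fin (p ^ k) =>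
        (Ideal.Quotient.mk
            (Ideal.span
              {f.map (algebraMap K (K[X] ⧸ Ideal.span {(X : K[X]) ^ p ^ k - 1}))})
            (Polynomial.C
              (Ideal.Quotient.mk (Ideal.span {(X : K[X]) ^ p ^ k - 1}) X)) - 1) ^ (i : ℕ) *
          Ideal.Quotient.mk
            (Ideal.span
              {f.map (algebraMap K (K[X] ⧸ Ideal.span {(X : K[X]) ^ p ^ k - 1}))})
            ((h i).map (algebraMap K (K[X] ⧸ Ideal.span {(X : K[X]) ^ p ^ k - 1})))) :=
  ideal_structure_over_chain_ring_general p hp e hpe k f hdvd C
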